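/- arXiv:2105.09553 — 3 statements merged into one kernel-verified Lean document; each statement's English description precedes it below -/
import Mathlib

section
/- Restriction of a perfect matching: if M is a perfect matching of the augmented bipartite graph (with m-k new left and n-k new right vertices) in which every new vertex is matched to an old vertex, then the set of edges of M joining two old vertices is a matching of the original graph of cardinality exactly k. -/
open Finset

/-- If `e` is a perfect matching of the augmented bipartite graph
in which every new vertex is matched to an old vertex, then the set of matched
pairs joining two old vertices is a matching of the original graph of
cardinality exactly `k`. -/
theorem restriction_of_perfect_matching
    (n m k : ℕ) (hk : k ≤ min n m)
    (e : (Fin n ⊕ Fin (m - k)) ≃ (Fin m ⊕ Fin (n - k)))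
    (hnewL : ∀ x : Fin (m - k), (e (Sum.inr x)).isLeft)
    (hnewR : ∀ y : Fin (n - k), (e.symm (Sum.inr y)).isLeft) :
    ((univ.filter fun p : Fin n × Fin m => e (Sum.inl p.1) = Sum.inl p.2).card = k) ∧
    (∀ p ∈ univ.filter fun p : Fin n × Fin m => e (Sum.inl p.1) = Sum.inl p.2,
      ∀ q ∈ univ.filter fun p : Fin n × Fin m => e (Sum.inl p.1) = Sum.inl p.2,
        (p.1 = q.1 ∨ p.2 = q.2) → p = q) := by
  constructor
  · have h1 : (univ.filter fun p : Fin n × Fin m => e (Sum.inl p.1) = Sum.inl p.2).card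
        = (univ.filter fun a : Fin n => (e (Sum.inl a)).isLeft).card := by
      apply Finset.card_bij (fun p _ => p.1)
      · intro p hp
        simp only [mem_filter, mem_univ, true_and] at hp ⊢
        rw [hp]; rfl
      · intro p hp q hq h
        simp only [mem_filter, mem_univ, true_and] at hp hq
        have : (Sum.inl p.2 : Fin m ⊕ Fin (n - k)) = Sum.inl q.2 := by rw [← hp, ← hq, h]
        exact Prod.ext h (Sum.inl.inj this)
      · intro a ha
        simp only [mem_filter, mem_univ, true_and] at ha
        obtain ⟨b, hb⟩ := Sum.isLeft_iff.mp ha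
        exact ⟨(a, b), by simp [hb], rfl⟩
    have h2 : (univ : Finset (Fin (n - k))).card
        = (univ.filter fun a : Fin n => ¬ (e (Sum.inl a)).isLeft).card := by
      apply Finset.card_bij (fun y _ => (e.symm (Sum.inr y)).getLeft (hnewR y))
      · intro y _
        simp only [mem_filter, mem_univ, true_and]
        have h := Sum.eq_left_iff_getLeft_eq.mpr
          ⟨hnewR y, rfl⟩ |>.symm
        rw [h, Equiv.apply_symm_apply]
        simp
      · intro y _ z _ h
        have hy : e.symm (Sum.inr y) = Sum.inl ((e.symm (Sum.inr y)).getLeft (hnewR y)) :=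
          (Sum.eq_left_iff_getLeft_eq.mpr ⟨hnewR y, rfl⟩)
        have hz : e.symm (Sum.inr z) = Sum.inl ((e.symm (Sum.inr z)).getLeft (hnewR z)) :=
          (Sum.eq_left_iff_getLeft_eq.mpr ⟨hnewR z, rfl⟩)
        have : e.symm (Sum.inr y) = e.symm (Sum.inr z) := by rw [hy, hz, h]
        exact Sum.inr.inj (e.symm.injective this)
      · intro a ha
        simp only [mem_filter, mem_univ, true_and] at ha
        obtain ⟨y, hy⟩ := Sum.isRight_iff.mp (Sum.not_isLeft.mp ha)
        refine ⟨y, mem_univ _, ?_⟩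
        have : e.symm (Sum.inr y) = Sum.inl a := by rw [← hy, Equiv.symm_apply_apply]
        obtain ⟨h, hh⟩ := Sum.eq_left_iff_getLeft_eq.mp this
        exact hh
    have h3 := Finset.card_filter_add_card_filter_not
      (s := (univ : Finset (Fin n))) (p := fun a : Fin n => (e (Sum.inl a)).isLeft)
    rw [← h2] at h3
    simp only [Finset.card_univ, Fintype.card_fin] at h3
    rw [h1]
    omega
  · intro p hp q hq h
    simp only [mem_filter, mem_univ, true_and] at hp hq
    rcases h with h | h
    · have : (Sum.inl p.2 : Fin m ⊕ Fin (n - k)) = Sum.inl q.2 := by rw [← hp, ← hq, h]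
      exact Prod.ext h (Sum.inl.inj this)
    · have : (Sum.inl p.1 : Fin n ⊕ Fin (m - k)) = Sum.inl q.1 :=
        e.injective (by rw [hp, hq, h])
      exact Prod.ext (Sum.inl.inj this) h
end

section
/- If A is chosen strictly larger than the sum of all (nonnegative) original edge weights plus 1, then every maximum-weight perfect matching of the augmented graph matches every new vertex to an old vertex (i.e., no edge of the matching joins two new vertices), provided k ≥ 1 and such a matching exists. -/
open Finset

/-- Edge weights of the augmented graph: original edges keep weight `w`,
new-to-old edges weigh `A`, new-to-new edges weigh `0`. -/
def augWeight {n m a b : ℕ} (w : Fin n → Fin m → ℝ) (A : ℝ) :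
    (Fin n ⊕ Fin a) → (Fin m ⊕ Fin b) → ℝ
  | Sum.inl i, Sum.inl j => w i j
  | Sum.inl _, Sum.inr _ => A
  | Sum.inr _, Sum.inl _ => A
  | Sum.inr _, Sum.inr _ => 0

/-- If `A` is strictly larger than the sum of all (nonnegative)
original edge weights plus 1, and `1 ≤ k ≤ min n m`, then every maximum-weight
perfect matching of the augmented graph matches every new vertex to an old
vertex, i.e. no matched edge joins two new vertices. -/
theorem large_A_forces_new_old_matching
    (n m k : ℕ) (hk : k ≤ min n m) (hk1 : 1 ≤ k)
    (w : Fin n → Fin m → ℝ) (hw : ∀ i j, 0 ≤ w i j) (A : ℝ)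
    (hA : (∑ i : Fin n, ∑ j : Fin m, w i j) + 1 < A)
    (e : (Fin n ⊕ Fin (m - k)) ≃ (Fin m ⊕ Fin (n - k)))
    (hmax : ∀ e' : (Fin n ⊕ Fin (m - k)) ≃ (Fin m ⊕ Fin (n - k)),
      ∑ x : Fin n ⊕ Fin (m - k), augWeight w A x (e' x)
        ≤ ∑ x : Fin n ⊕ Fin (m - k), augWeight w A x (e x)) :
    (∀ x : Fin (m - k), (e (Sum.inr x)).isLeft) ∧
    (∀ y : Fin (n - k), (e.symm (Sum.inr y)).isLeft) := by
  have hS0 : (0:ℝ) ≤ ∑ i : Fin n, ∑ j : Fin m, w i j :=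
    Finset.sum_nonneg fun i _ => Finset.sum_nonneg fun j _ => hw i j
  have hA0 : (0:ℝ) < A := by linarith
  have key : ∀ x : Fin (m - k), (e (Sum.inr x)).isLeft := by
    intro x
    by_contra hx
    obtain ⟨y, hy⟩ : ∃ y, e (Sum.inr x) = Sum.inr y := by
      cases h : e (Sum.inr x) with
      | inl j => simp [h] at hx
      | inr y => exact ⟨y, rfl⟩
    obtain ⟨i, j, hij⟩ : ∃ i j, e (Sum.inl i) = Sum.inl j := by
      by_contra hno
      push_neg at hno
      have hall : ∀ i : Fin n, ∃ y', e (Sum.inl i) = Sum.inr y' := by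
        intro i
        cases h : e (Sum.inl i) with
        | inl j => exact absurd h (hno i j)
        | inr y' => exact ⟨y', rfl⟩
      choose g hg using hall
      have hginj : Function.Injective g := by
        intro a b hab
        have h1 : e (Sum.inl a) = e (Sum.inl b) := by rw [hg a, hg b, hab]
        simpa using e.injective h1
      have hcard := Fintype.card_le_of_injective g hginj
      simp only [Fintype.card_fin] at hcard
      omega
    set a : Fin n ⊕ Fin (m - k) := Sum.inl i with ha
    set b : Fin n ⊕ Fin (m - k) := Sum.inr x with hb
    have hab : a ≠ b := by simp [ha, hb]
    set e' : (Fin n ⊕ Fin (m - k)) ≃ (Fin m ⊕ Fin (n - k)) :=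
      (Equiv.swap a b).trans e with he'
    have hsplit : ∀ u : (Fin n ⊕ Fin (m - k)) → ℝ,
        ∑ z, u z = u a + u b + ∑ z ∈ (Finset.univ.erase a).erase b, u z := by
      intro u
      rw [← Finset.add_sum_erase _ u (Finset.mem_univ a),
        ← Finset.add_sum_erase _ u
          (Finset.mem_erase.mpr ⟨hab.symm, Finset.mem_univ b⟩), ← add_assoc]
    have hrest : ∑ z ∈ (Finset.univ.erase a).erase b, augWeight w A z (e' z)
        = ∑ z ∈ (Finset.univ.erase a).erase b, augWeight w A z (e z) := by
      apply Finset.sum_congr rfl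
      intro z hz
      rw [Finset.mem_erase, Finset.mem_erase] at hz
      simp [he', Equiv.swap_apply_of_ne_of_ne hz.2.1 hz.1]
    have hmax' := hmax e'
    rw [hsplit (fun z => augWeight w A z (e' z)),
        hsplit (fun z => augWeight w A z (e z)), hrest] at hmax'
    have he'a : e' a = Sum.inr y := by simp [he', hy]
    have he'b : e' b = Sum.inl j := by simp [he', hij]
    have hval : augWeight w A a (e' a) = A := by rw [he'a]; rfl
    have hval2 : augWeight w A b (e' b) = A := by rw [he'b]; rfl
    have hvala : augWeight w A a (e a) = w i j := by rw [ha, hij]; rfl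
    have hvalb : augWeight w A b (e b) = 0 := by rw [hb, hy]; rfl
    simp only [hval, hval2, hvala, hvalb] at hmax'
    have h1 : w i j ≤ ∑ j', w i j' :=
      Finset.single_le_sum (fun j' _ => hw i j') (Finset.mem_univ j)
    have h2 : (∑ j', w i j') ≤ ∑ i', ∑ j', w i' j' :=
      Finset.single_le_sum
        (fun i' _ => Finset.sum_nonneg fun j' _ => hw i' j') (Finset.mem_univ i)
    linarith
  refine ⟨key, fun y => ?_⟩
  cases h : e.symm (Sum.inr y) with
  | inl j => simp
  | inr x =>
    have hxy : e (Sum.inr x) = Sum.inr y := by rw [← h, Equiv.apply_symm_apply]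
    have := key x
    rw [hxy] at this
    simp at this
end

section
/- Value of the transformed problem: with A chosen larger than the total weight of all original edges, the maximum weight of a perfect matching in the augmented graph equals the maximum weight of a k-cardinality matching in the original complete bipartite graph plus (n+m-2k)·A. -/
open Finset

/-- `M` is a matching (set of pairwise non-adjacent edges) of `K_{n,m}`. -/
def IsBipMatching {n m : ℕ} (M : Finset (Fin n × Fin m)) : Prop :=
  ∀ p ∈ M, ∀ q ∈ M, (p.1 = q.1 ∨ p.2 = q.2) → p = q

/-!
A perfect matching `e` of the augmented graph restricts to a matching `M` of `K_{n,m}`, namely the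
original edges it uses. Writing each augmented weight as an original weight shifted by `-2A` plus
`A` for each endpoint on the original side shows that `e` weighs `w(M) + (n + m - 2|M|) A`, and
since at most `n - k` old left vertices fit onto the new right side, `|M| ≥ k`. For `|M| = k` this
is at most the optimum plus `(n + m - 2k) A`; for `|M| > k` the loss of at least `2A` exceeds every
original weight. Conversely, an optimal matching, padded to exactly `k` edges (weights are
nonnegative), extends to a perfect matching of the augmented graph that sends the unmatched old
vertices of each side onto the new vertices of the other side.
-/

variable {n m n' m' : ℕ}

namespace IsBipMatching

variable {M : Finset (Fin n × Fin m)}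

lemma insert (hM : IsBipMatching M) {i : Fin n} {j : Fin m}
    (hi : i ∉ M.image Prod.fst) (hj : j ∉ M.image Prod.snd) :
    IsBipMatching (insert (i, j) M) := by
  have hfree : ∀ q ∈ M, q.1 ≠ i ∧ q.2 ≠ j := fun q hq =>
    ⟨fun h => hi (mem_image.2 ⟨q, hq, h⟩), fun h => hj (mem_image.2 ⟨q, hq, h⟩)⟩
  intro p hp q hq hpq
  rcases mem_insert.1 hp with rfl | hp <;> rcases mem_insert.1 hq with rfl | hq
  · rfl
  · have := hfree q hq; tauto
  · have := hfree p hp; tauto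
  · exact hM p hp q hq hpq

lemma exists_superset_card_eq (hM : IsBipMatching M) {k : ℕ} (hMk : #M ≤ k)
    (hkn : k ≤ n) (hkm : k ≤ m) : ∃ M', M ⊆ M' ∧ IsBipMatching M' ∧ #M' = k := by
  induction k with
  | zero => exact ⟨M, subset_rfl, hM, by omega⟩
  | succ k ih =>
    rcases hMk.eq_or_lt with hMk | hMk
    · exact ⟨M, subset_rfl, hM, hMk⟩
    obtain ⟨M', hMM', hM', hM'k⟩ := ih (by omega) (by omega) (by omega)
    obtain ⟨i, -, hi⟩ := exists_mem_notMem_of_card_lt_card (s := M'.image Prod.fst)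
      (t := univ) (by grind [card_image_le, card_univ, Fintype.card_fin])
    obtain ⟨j, -, hj⟩ := exists_mem_notMem_of_card_lt_card (s := M'.image Prod.snd)
      (t := univ) (by grind [card_image_le, card_univ, Fintype.card_fin])
    refine ⟨_, hMM'.trans (subset_insert (i, j) M'), hM'.insert hi hj, ?_⟩
    rw [card_insert_of_notMem fun h => hi (mem_image_of_mem _ h), hM'k]

lemma exists_equiv_image (hM : IsBipMatching M) :
    ∃ μ : M.image Prod.fst ≃ M.image Prod.snd,
      ∀ i hi j, (μ ⟨i, hi⟩ : Fin m) = j ↔ (i, j) ∈ M := by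
  let φ : M ≃ M.image Prod.fst := Equiv.ofBijective (fun p => ⟨p.1.1, mem_image_of_mem _ p.2⟩)
    ⟨fun p q h => Subtype.ext (hM _ p.2 _ q.2 (.inl (congrArg Subtype.val h))), by
      rintro ⟨_, hx⟩; obtain ⟨p, hp, rfl⟩ := mem_image.1 hx; exact ⟨⟨p, hp⟩, rfl⟩⟩
  let ψ : M ≃ M.image Prod.snd := Equiv.ofBijective (fun p => ⟨p.1.2, mem_image_of_mem _ p.2⟩)
    ⟨fun p q h => Subtype.ext (hM _ p.2 _ q.2 (.inr (congrArg Subtype.val h))), by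
      rintro ⟨_, hx⟩; obtain ⟨p, hp, rfl⟩ := mem_image.1 hx; exact ⟨⟨p, hp⟩, rfl⟩⟩
  refine ⟨φ.symm.trans ψ, fun i hi j => ?_⟩
  obtain ⟨p, hp, rfl⟩ := mem_image.1 hi
  have : φ.symm ⟨p.1, hi⟩ = ⟨p, hp⟩ := φ.symm_apply_eq.2 rfl
  simp only [Equiv.trans_apply, this]
  exact ⟨fun h => h ▸ hp, fun h => congrArg Prod.snd (hM p hp _ h (.inl rfl))⟩

end IsBipMatching

def matchedPairs (e : (Fin n ⊕ Fin m') ≃ (Fin m ⊕ Fin n')) : Finset (Fin n × Fin m) :=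
  {p | e (.inl p.1) = .inl p.2}

lemma mem_matchedPairs {e : (Fin n ⊕ Fin m') ≃ (Fin m ⊕ Fin n')} {p : Fin n × Fin m} :
    p ∈ matchedPairs e ↔ e (.inl p.1) = .inl p.2 := by
  simp [matchedPairs]

lemma isBipMatching_matchedPairs (e : (Fin n ⊕ Fin m') ≃ (Fin m ⊕ Fin n')) :
    IsBipMatching (matchedPairs e) := by
  rintro ⟨i, j⟩ hp ⟨i', j'⟩ hq h
  rw [mem_matchedPairs] at hp hq
  rcases h with rfl | rfl
  · exact Prod.ext rfl (Sum.inl_injective (hp.symm.trans hq))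
  · exact Prod.ext (Sum.inl_injective (e.injective (hp.trans hq.symm))) rfl

lemma le_card_matchedPairs_add (e : (Fin n ⊕ Fin m') ≃ (Fin m ⊕ Fin n')) :
    n ≤ #(matchedPairs e) + n' := by
  set L := (matchedPairs e).image Prod.fst
  have hunmatched :
      #(univ \ L) ≤ #(univ.map (Function.Embedding.inr : Fin n' ↪ Fin m ⊕ Fin n')) := by
    refine card_le_card_of_injOn (fun i => e (.inl i)) (fun i hi => ?_)
      fun i _ i' _ h => Sum.inl_injective (e.injective h)
    cases h : e (.inl i) with
    | inl j =>
      exact absurd (mem_image_of_mem Prod.fst (mem_matchedPairs.2 h : (i, j) ∈ _))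
        (mem_sdiff.1 hi).2
    | inr p => simp [h]
  calc n = #(univ \ L) + #L := by rw [card_sdiff_add_card_eq_card (subset_univ L)]; simp
    _ ≤ n' + #(matchedPairs e) := by grind [card_image_le, card_map, card_univ, Fintype.card_fin]
    _ = #(matchedPairs e) + n' := add_comm _ _

lemma sum_augWeight_zero (g : Fin n → Fin m → ℝ) (e : (Fin n ⊕ Fin m') ≃ (Fin m ⊕ Fin n')) :
    ∑ x, augWeight g 0 x (e x) = ∑ p ∈ matchedPairs e, g p.1 p.2 := by
  have hleft : ∀ i, augWeight g 0 (.inl i : Fin n ⊕ Fin m') (e (.inl i))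
      = ∑ j, if e (.inl i) = .inl j then g i j else 0 := by
    intro i
    cases e (.inl i) <;> simp [augWeight]
  have hright : ∀ p, augWeight g 0 (.inr p : Fin n ⊕ Fin m') (e (.inr p)) = 0 := by
    intro p
    cases e (.inr p) <;> rfl
  simp only [Fintype.sum_sum_type, hleft, hright, sum_const_zero, add_zero, matchedPairs,
    sum_filter, Fintype.sum_prod_type]

lemma augWeight_eq_augWeight_zero_add (w : Fin n → Fin m → ℝ) (A : ℝ)
    (x : Fin n ⊕ Fin m') (y : Fin m ⊕ Fin n') :
    augWeight w A x y = augWeight (fun i j => w i j - 2 * A) 0 x y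
      + A * (Sum.elim (fun _ => 1) (fun _ => 0) x + Sum.elim (fun _ => 1) (fun _ => 0) y) := by
  cases x <;> cases y <;> simp [augWeight]
  ring

lemma sum_augWeight_eq (w : Fin n → Fin m → ℝ) (A : ℝ)
    (e : (Fin n ⊕ Fin m') ≃ (Fin m ⊕ Fin n')) :
    ∑ x, augWeight w A x (e x)
      = ∑ p ∈ matchedPairs e, w p.1 p.2 + (n + m - 2 * #(matchedPairs e)) * A := by
  have hside : ∀ {r s : ℕ},
      ∑ x : Fin r ⊕ Fin s, Sum.elim (fun _ => (1 : ℝ)) (fun _ => 0) x = r := by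
    simp [Fintype.sum_sum_type]
  simp_rw [augWeight_eq_augWeight_zero_add w A, sum_add_distrib, sum_augWeight_zero, ← mul_sum,
    sum_add_distrib, Equiv.sum_comp e (Sum.elim (fun _ => (1 : ℝ)) (fun _ => 0)), hside,
    sum_sub_distrib, ← sum_mul]
  simp only [sum_const, nsmul_eq_mul]
  ring

lemma IsBipMatching.exists_matchedPairs_eq {M : Finset (Fin n × Fin m)} (hM : IsBipMatching M)
    (hn' : n' + #M = n) (hm' : m' + #M = m) :
    ∃ e : (Fin n ⊕ Fin m') ≃ (Fin m ⊕ Fin n'), matchedPairs e = M := by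
  set L := M.image Prod.fst
  set R := M.image Prod.snd
  obtain ⟨μ, hμ⟩ := hM.exists_equiv_image
  have hcard : ∀ {α : Type} [Fintype α] [DecidableEq α] (f : Fin n × Fin m → α),
      Set.InjOn f M → Fintype.card {x // x ∉ M.image f} = Fintype.card α - #M := by
    intro α _ _ f hf
    rw [Fintype.card_subtype_compl, Fintype.card_coe, card_image_of_injOn hf]
  have eL : {i // i ∉ L} ≃ Fin n' := Fintype.equivFinOfCardEq <| by
    rw [hcard _ fun p hp q hq h => hM p hp q hq (.inl h)]; simp; omega
  have eR : {j // j ∉ R} ≃ Fin m' := Fintype.equivFinOfCardEq <| by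
    rw [hcard _ fun p hp q hq h => hM p hp q hq (.inr h)]; simp; omega
  -- matched old-left vertices go along `μ`, the other old-left vertices to the new right side,
  -- and the new left side onto the unmatched old-right vertices
  let e : (Fin n ⊕ Fin m') ≃ (Fin m ⊕ Fin n') :=
    ((Equiv.sumCompl (· ∈ L)).symm.sumCongr (Equiv.refl _)).trans <|
      (Equiv.sumAssoc _ _ _).trans <|
        (μ.sumCongr ((eL.sumCongr eR.symm).trans (Equiv.sumComm _ _))).trans <|
          (Equiv.sumAssoc _ _ _).symm.trans ((Equiv.sumCompl (· ∈ R)).sumCongr (Equiv.refl _))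
  refine ⟨e, Finset.ext fun ⟨i, j⟩ => ?_⟩
  rw [mem_matchedPairs]
  by_cases hi : i ∈ L
  · simp [e, Equiv.sumCompl_symm_apply_of_pos hi, ← hμ i hi]
  · simpa [e, Equiv.sumCompl_symm_apply_of_neg hi] using
      fun h : (i, j) ∈ M => hi (mem_image_of_mem Prod.fst h)

lemma sum_augWeight_le {k : ℕ} (hkn : k ≤ n) {w : Fin n → Fin m → ℝ} (hw : ∀ i j, 0 ≤ w i j)
    {A : ℝ} (hA : ∑ i, ∑ j, w i j < A) {c : ℝ} (hc : 0 ≤ c)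
    (hmax : ∀ M, IsBipMatching M → #M ≤ k → ∑ p ∈ M, w p.1 p.2 ≤ c)
    (e : (Fin n ⊕ Fin m') ≃ (Fin m ⊕ Fin (n - k))) :
    ∑ x, augWeight w A x (e x) ≤ c + (n + m - 2 * k) * A := by
  have hkM : k ≤ #(matchedPairs e) := by have := le_card_matchedPairs_add e; omega
  set M := matchedPairs e
  rw [sum_augWeight_eq]
  rcases hkM.eq_or_lt with hkM | hkM
  · rw [← hkM]
    linarith [hmax M (isBipMatching_matchedPairs e) hkM.ge]
  have hwM : ∑ p ∈ M, w p.1 p.2 ≤ ∑ i, ∑ j, w i j := by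
    rw [← Fintype.sum_prod_type']
    exact sum_le_univ_sum_of_nonneg fun p => hw p.1 p.2
  have hw0 : 0 ≤ ∑ i, ∑ j, w i j := sum_nonneg fun i _ => sum_nonneg fun j _ => hw i j
  have hkM' : (k : ℝ) + 1 ≤ #M := by exact_mod_cast hkM
  nlinarith

/-- With `A` larger than the total weight of all original edges,
the maximum weight of a perfect matching of the augmented graph equals the
maximum weight of a `k`-cardinality matching of `K_{n,m}` plus
`(n + m - 2k) * A`. -/
theorem transformed_problem_value
    (n m k : ℕ) (hk : k ≤ min n m)
    (w : Fin n → Fin m → ℝ) (hw : ∀ i j, 0 ≤ w i j) (A : ℝ)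
    (hA : (∑ i : Fin n, ∑ j : Fin m, w i j) < A)
    (a : ℝ)
    (ha : IsGreatest {v : ℝ | ∃ M : Finset (Fin n × Fin m),
        IsBipMatching M ∧ M.card ≤ k ∧ v = ∑ p ∈ M, w p.1 p.2} a) :
    IsGreatest {v : ℝ | ∃ e : (Fin n ⊕ Fin (m - k)) ≃ (Fin m ⊕ Fin (n - k)),
        v = ∑ x : Fin n ⊕ Fin (m - k), augWeight w A x (e x)}
      (a + ((n + m - 2 * k : ℕ) : ℝ) * A) := by
  obtain ⟨hkn, hkm⟩ := le_min_iff.1 hk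
  have hcast : ((n + m - 2 * k : ℕ) : ℝ) = n + m - 2 * k := by
    rw [Nat.cast_sub (by omega)]; push_cast; ring
  obtain ⟨⟨M₀, hM₀, hM₀k, rfl⟩, hmax⟩ := ha
  rw [hcast]
  refine ⟨?_, ?_⟩
  · obtain ⟨M, hM₀M, hM, hMk⟩ := hM₀.exists_superset_card_eq hM₀k hkn hkm
    obtain ⟨e, he⟩ := hM.exists_matchedPairs_eq (n' := n - k) (m' := m - k) (by omega) (by omega)
    have hwM : ∑ p ∈ M, w p.1 p.2 = ∑ p ∈ M₀, w p.1 p.2 :=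
      (hmax ⟨M, hM, hMk.le, rfl⟩).antisymm
        (sum_le_sum_of_subset_of_nonneg hM₀M fun p _ _ => hw p.1 p.2)
    exact ⟨e, by rw [sum_augWeight_eq, he, hwM, hMk]⟩
  · rintro _ ⟨e, rfl⟩
    exact sum_augWeight_le hkn hw hA (hmax ⟨∅, by simp [IsBipMatching], by simp, by simp⟩)
      (fun M hM hMk => hmax ⟨M, hM, hMk, rfl⟩) e
end
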